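/- arXiv:2510.21056 — 4 statements merged into one kernel-verified Lean document; each statement's English description precedes it below -/
import Mathlib

section
/- Let a_1, a_2, b_1, a_3, b_2, b_3 be natural numbers with 1 ≤ a_1 ≤ a_2 ≤ b_1, b_1 + 1 ≤ a_3, and a_3 ≤ b_2 ≤ b_3. Then the number of pairs of natural numbers (c, d) with 1 ≤ c that satisfy (c ≤ a_2 and a_2 ≤ d and d ≤ b_2), do NOT satisfy (c ≤ a_1 and a_1 ≤ d and d ≤ b_1), and do NOT satisfy (c ≤ a_3 and a_3 ≤ d and d ≤ b_3), equals, as an integer, a_1(a_2 − (b_1 + 1)) + a_2(a_3 − a_2). -/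
/-- Proposition 3.7(1), combinatorial form. -/
theorem stmt2 (a₁ a₂ b₁ a₃ b₂ b₃ : ℕ)
    (h1 : 1 ≤ a₁) (h2 : a₁ ≤ a₂) (h3 : a₂ ≤ b₁) (h4 : b₁ + 1 ≤ a₃)
    (h5 : a₃ ≤ b₂) (h6 : b₂ ≤ b₃) :
    (({cd : ℕ × ℕ | 1 ≤ cd.1 ∧
        (cd.1 ≤ a₂ ∧ a₂ ≤ cd.2 ∧ cd.2 ≤ b₂) ∧
        ¬(cd.1 ≤ a₁ ∧ a₁ ≤ cd.2 ∧ cd.2 ≤ b₁) ∧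
        ¬(cd.1 ≤ a₃ ∧ a₃ ≤ cd.2 ∧ cd.2 ≤ b₃)}.ncard : ℤ))
      = (a₁ : ℤ) * ((a₂ : ℤ) - ((b₁ : ℤ) + 1)) + (a₂ : ℤ) * ((a₃ : ℤ) - (a₂ : ℤ)) := by
  have hset : {cd : ℕ × ℕ | 1 ≤ cd.1 ∧
        (cd.1 ≤ a₂ ∧ a₂ ≤ cd.2 ∧ cd.2 ≤ b₂) ∧
        ¬(cd.1 ≤ a₁ ∧ a₁ ≤ cd.2 ∧ cd.2 ≤ b₁) ∧
        ¬(cd.1 ≤ a₃ ∧ a₃ ≤ cd.2 ∧ cd.2 ≤ b₃)} =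
      ↑((Finset.Icc (a₁+1) a₂ ×ˢ Finset.Icc a₂ b₁) ∪
        (Finset.Icc 1 a₂ ×ˢ Finset.Icc (b₁+1) (a₃-1))) := by
    ext ⟨c, d⟩
    simp only [Set.mem_setOf_eq, Finset.coe_union, Set.mem_union, Finset.coe_product,
      Set.mem_prod, Finset.mem_coe, Finset.mem_Icc]
    omega
  rw [hset, Set.ncard_coe_finset, Finset.card_union_of_disjoint, Finset.card_product,
    Finset.card_product, Nat.card_Icc, Nat.card_Icc, Nat.card_Icc, Nat.card_Icc]
  · zify [show a₁+1 ≤ a₂+1 by omega, show a₂ ≤ b₁+1 by omega,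
      show (1:ℕ) ≤ a₂+1 by omega, show b₁+1 ≤ a₃-1+1 by omega,
      show (1:ℕ) ≤ a₃ by omega]
    ring
  · rw [Finset.disjoint_left]
    rintro ⟨c, d⟩ h h'
    simp only [Finset.mem_product, Finset.mem_Icc] at h h'
    omega
end

section
/- Let m ≥ 1 be an integer and let a_0, a_1, …, a_m and b_0, b_1, …, b_m be natural numbers, and let a, b be natural numbers such that a_0 = a, a_1 = b + 1, and b_{m-1} = b_m. Then, in ℤ, ∑_{i=1}^{m-1} [ a_{i-1}(a_i − (b_{i-1} + 1)) + a_i(a_{i+1} − a_i) ] + (a_m − a_{m-1})(b_m + 1 − a_m) = a_m(b_m + 1) − a(b + 1) + ∑_{i=1}^{m} ( 2 a_i a_{i-1} − a_i² − a_{i-1}(b_{i-1} + 1) ). -/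
lemma telescope (A B : ℕ → ℕ) (n : ℕ) :
    ∑ i ∈ Finset.Icc 1 n,
      (((A (i - 1) : ℤ) * ((A i : ℤ) - ((B (i - 1) : ℤ) + 1))
          + (A i : ℤ) * ((A (i + 1) : ℤ) - (A i : ℤ)))
        - (2 * (A i : ℤ) * (A (i - 1) : ℤ) - (A i : ℤ) ^ 2
              - (A (i - 1) : ℤ) * ((B (i - 1) : ℤ) + 1)))
      = (A n : ℤ) * (A (n + 1) : ℤ) - (A 0 : ℤ) * (A 1 : ℤ) := by
  induction n with
  | zero => simp
  | succ k ih =>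
      rw [Finset.sum_Icc_succ_top (by omega : 1 ≤ k + 1), ih]
      simp only [Nat.add_sub_cancel]
      ring

/-- Proposition 3.6: closed-form identity for the Ext-counts along a
projective resolution. -/
theorem stmt4 (m : ℕ) (hm : 1 ≤ m) (A B : ℕ → ℕ) (a b : ℕ)
    (h0 : A 0 = a) (h1 : A 1 = b + 1) (hb : B (m - 1) = B m) :
    (∑ i ∈ Finset.Icc 1 (m - 1),
        ((A (i - 1) : ℤ) * ((A i : ℤ) - ((B (i - 1) : ℤ) + 1))
          + (A i : ℤ) * ((A (i + 1) : ℤ) - (A i : ℤ))))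
      + ((A m : ℤ) - (A (m - 1) : ℤ)) * ((B m : ℤ) + 1 - (A m : ℤ))
      = (A m : ℤ) * ((B m : ℤ) + 1) - (a : ℤ) * ((b : ℤ) + 1)
        + ∑ i ∈ Finset.Icc 1 m,
            (2 * (A i : ℤ) * (A (i - 1) : ℤ) - (A i : ℤ) ^ 2
              - (A (i - 1) : ℤ) * ((B (i - 1) : ℤ) + 1)) := by
  obtain ⟨n, rfl⟩ : ∃ n, m = n + 1 := ⟨m - 1, by omega⟩
  simp only [Nat.add_sub_cancel] at *
  have key := telescope A B n
  rw [Finset.sum_sub_distrib] at key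
  rw [Finset.sum_Icc_succ_top (by omega : 1 ≤ n + 1)]
  simp only [Nat.add_sub_cancel]
  have e1 : (∑ i ∈ Finset.Icc 1 n,
        ((A (i - 1) : ℤ) * ((A i : ℤ) - ((B (i - 1) : ℤ) + 1))
          + (A i : ℤ) * ((A (i + 1) : ℤ) - (A i : ℤ)))) =
      (∑ i ∈ Finset.Icc 1 n,
        (2 * (A i : ℤ) * (A (i - 1) : ℤ) - (A i : ℤ) ^ 2
              - (A (i - 1) : ℤ) * ((B (i - 1) : ℤ) + 1)))
        + ((A n : ℤ) * (A (n + 1) : ℤ) - (A 0 : ℤ) * (A 1 : ℤ)) := by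
    linarith [key]
  rw [e1, h0, h1, hb]
  push_cast
  ring
end

section
/- For every natural number n ≥ 1, ∑_{a=1}^{n-1} ∑_{b=a}^{n-1} (b + 1 − a)(n − b) = C(n+2, 4), where C(n, k) denotes the binomial coefficient. -/
open Finset

private lemma sumid (t : ℕ) : ∑ j ∈ Finset.range t, (j + 1) = (t + 1).choose 2 := by
  induction t with
  | zero => decide
  | succ t ih =>
    rw [Finset.sum_range_succ, ih]
    rw [show t + 1 + 1 = t + 2 by rfl, Nat.choose_succ_succ (t + 1) 1]
    simp [Nat.choose_one_right]
    omega

private lemma conv3 (t : ℕ) :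
    ∑ j ∈ Finset.range (t + 1), (j + 1) * (t + 1 - j) = (t + 3).choose 3 := by
  induction t with
  | zero => decide
  | succ t ih =>
    have key : ∀ j ∈ Finset.range (t + 2),
        (j + 1) * (t + 2 - j) = (j + 1) * (t + 1 - j) + (j + 1) := by
      intro j hj
      simp only [Finset.mem_range] at hj
      have : t + 2 - j = (t + 1 - j) + 1 := by omega
      rw [this, Nat.mul_add, Nat.mul_one]
    rw [Finset.sum_congr rfl key, Finset.sum_add_distrib]
    rw [Finset.sum_range_succ (fun j => (j + 1) * (t + 1 - j)), Nat.sub_self, Nat.mul_zero,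
      Nat.add_zero, ih, sumid]
    have h1 : (t + 1 + 3).choose 3 = (t + 3).choose 2 + (t + 3).choose 3 := by
      rw [show t + 1 + 3 = t + 3 + 1 by ring]; exact Nat.choose_succ_succ' (t + 3) 2
    have h2 : t + 2 + 1 = t + 3 := by ring
    rw [h2, h1]; omega

private lemma hockey (m : ℕ) :
    ∑ k ∈ Finset.range m, (k + 3).choose 3 = (m + 3).choose 4 := by
  induction m with
  | zero => decide
  | succ m ih =>
    rw [Finset.sum_range_succ, ih]
    have h1 : (m + 1 + 3).choose 4 = (m + 3).choose 3 + (m + 3).choose 4 := by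
      rw [show m + 1 + 3 = m + 3 + 1 by ring]; exact Nat.choose_succ_succ' (m + 3) 3
    omega

private lemma inner (a m : ℕ) (ha : a ≤ m) :
    ∑ b ∈ Finset.Icc a m, (b + 1 - a) * (m + 1 - b) = (m - a + 3).choose 3 := by
  rw [← Finset.Ico_add_one_right_eq_Icc, Finset.sum_Ico_eq_sum_range]
  have h : m + 1 - a = (m - a) + 1 := by omega
  rw [h, ← conv3 (m - a)]
  apply Finset.sum_congr rfl
  intro j hj
  simp only [Finset.mem_range] at hj
  congr 1 <;> omega

/-- Section 4.1: `∑_{a=1}^{n-1} ∑_{b=a}^{n-1} (b+1-a)(n-b) = C(n+2,4)`. -/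
theorem stmt6 (n : ℕ) (hn : 1 ≤ n) :
    ∑ a ∈ Finset.Icc 1 (n - 1), ∑ b ∈ Finset.Icc a (n - 1), (b + 1 - a) * (n - b)
      = (n + 2).choose 4 := by
  obtain ⟨m, rfl⟩ : ∃ m, n = m + 1 := ⟨n - 1, by omega⟩
  simp only [Nat.add_sub_cancel]
  have step1 : ∀ a ∈ Finset.Icc 1 m,
      ∑ b ∈ Finset.Icc a m, (b + 1 - a) * (m + 1 - b) = (m - a + 3).choose 3 := by
    intro a ha
    simp only [Finset.mem_Icc] at ha
    exact inner a m ha.2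
  rw [Finset.sum_congr rfl step1, ← Finset.Ico_add_one_right_eq_Icc, Finset.sum_Ico_eq_sum_range]
  rw [show m + 1 - 1 = m from rfl, show m + 1 + 2 = m + 3 by ring, ← hockey m, ← Finset.sum_range_reflect (fun k => (k + 3).choose 3) m]
  apply Finset.sum_congr rfl
  intro i hi
  simp only [Finset.mem_range] at hi
  congr 1
  omega
end

section
/- Let i′, i, p, q be natural numbers with i′ < i and set N = i − i′. Then, in ℚ, ∑_{a=i′+1}^{i} ∑_{b=a}^{i} (b + 1 − a)(i + p + 1 − b) + ∑_{a=i′+1}^{i} ∑_{b=i+1}^{i+p} [ (i + p)(i + 1 − a) + q(b − i) + (b + 1 − a)(1 − b) ] = C(N+3, 4) + p · C(N+2, 3) + t_p · ( 3 t_N + N ( q + i′ − 2i − (2p+1)/3 ) ), where C(n, k) denotes the binomial coefficient and t_m = m(m+1)/2 denotes the m-th triangular number. -/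
open Finset

/-- Sum of a cubic polynomial over `range n`. -/
lemma sum_cubic (n : ℕ) (c0 c1 c2 c3 : ℚ) :
    ∑ s ∈ Finset.range n, (c0 + c1 * (s : ℚ) + c2 * (s : ℚ) ^ 2 + c3 * (s : ℚ) ^ 3)
      = c0 * n + c1 * ((n : ℚ) * (n - 1) / 2)
        + c2 * ((n : ℚ) * (n - 1) * (2 * n - 1) / 6)
        + c3 * ((n : ℚ) ^ 2 * ((n : ℚ) - 1) ^ 2 / 4) := by
  induction n with
  | zero => simp
  | succ n ih =>
      rw [Finset.sum_range_succ, ih]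
      push_cast
      ring

lemma inner_tri (c : ℚ) (m : ℕ) :
    ∑ t ∈ Finset.range m, ((t : ℚ) + 1) * (c - t)
      = c * m * (m + 1) / 2 - ((m : ℚ) - 1) * m * (m + 1) / 3 := by
  induction m with
  | zero => simp
  | succ m ih =>
      rw [Finset.sum_range_succ, ih]
      push_cast
      ring

lemma chooseTwo (n : ℕ) : (((n + 1).choose 2 : ℕ) : ℚ) = (n + 1) * n / 2 := by
  induction n with
  | zero => simp
  | succ n ih =>
      rw [show n + 1 + 1 = (n + 1) + 1 from rfl, Nat.choose_succ_succ (n + 1) 1]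
      push_cast [ih, Nat.choose_one_right]
      ring

lemma chooseThree (n : ℕ) : (((n + 2).choose 3 : ℕ) : ℚ) = (n + 2) * (n + 1) * n / 6 := by
  induction n with
  | zero => simp
  | succ n ih =>
      rw [show n + 1 + 2 = (n + 2) + 1 from rfl, Nat.choose_succ_succ (n + 2) 2]
      push_cast [ih, chooseTwo (n + 1)]
      ring

lemma chooseFour (n : ℕ) :
    (((n + 3).choose 4 : ℕ) : ℚ) = (n + 3) * (n + 2) * (n + 1) * n / 24 := by
  induction n with
  | zero => simp
  | succ n ih =>
      rw [show n + 1 + 3 = (n + 3) + 1 from rfl, Nat.choose_succ_succ (n + 3) 3]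
      push_cast [ih, chooseThree (n + 1)]
      ring

/-- Theorem 4.1, per-block computation of `H_j`. -/
theorem stmt10 (i' i p q : ℕ) (h : i' < i) (N : ℕ) (hN : N = i - i') :
    (∑ a ∈ Finset.Icc (i' + 1) i, ∑ b ∈ Finset.Icc a i,
        ((b : ℚ) + 1 - (a : ℚ)) * ((i : ℚ) + (p : ℚ) + 1 - (b : ℚ)))
    + (∑ a ∈ Finset.Icc (i' + 1) i, ∑ b ∈ Finset.Icc (i + 1) (i + p),
        (((i : ℚ) + (p : ℚ)) * ((i : ℚ) + 1 - (a : ℚ))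
          + (q : ℚ) * ((b : ℚ) - (i : ℚ))
          + ((b : ℚ) + 1 - (a : ℚ)) * (1 - (b : ℚ))))
      = ((N + 3).choose 4 : ℚ) + (p : ℚ) * ((N + 2).choose 3 : ℚ)
        + ((p : ℚ) * ((p : ℚ) + 1) / 2) *
            (3 * ((N : ℚ) * ((N : ℚ) + 1) / 2)
              + (N : ℚ) * ((q : ℚ) + (i' : ℚ) - 2 * (i : ℚ)
                  - (2 * (p : ℚ) + 1) / 3)) := by
  have hiq : (i : ℚ) = (N : ℚ) + (i' : ℚ) := by
    rw [hN, Nat.cast_sub h.le]; ring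
  have houter : i + 1 - (i' + 1) = N := by omega
  have A : (∑ a ∈ Finset.Icc (i' + 1) i, ∑ b ∈ Finset.Icc a i,
        ((b : ℚ) + 1 - (a : ℚ)) * ((i : ℚ) + (p : ℚ) + 1 - (b : ℚ)))
      = ((N + 3).choose 4 : ℚ) + (p : ℚ) * ((N + 2).choose 3 : ℚ) := by
    rw [← Finset.Ico_add_one_right_eq_Icc, Finset.sum_Ico_eq_sum_range, houter]
    trans ∑ s ∈ Finset.range N,
        ((((N:ℚ)^3 + (3*(p:ℚ)+3)*(N:ℚ)^2 + (3*(p:ℚ)+2)*(N:ℚ)) / 6)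
          + (-((3*(N:ℚ)^2 + 6*(N:ℚ)*((p:ℚ)+1) + 3*(p:ℚ)+2) / 6)) * (s : ℚ)
          + ((3*(N:ℚ) + 3*(p:ℚ) + 3) / 6) * (s : ℚ) ^ 2
          + (-1/6 : ℚ) * (s : ℚ) ^ 3)
    · refine Finset.sum_congr rfl fun s hs => ?_
      have hsN : s < N := Finset.mem_range.mp hs
      rw [← Finset.Ico_add_one_right_eq_Icc, Finset.sum_Ico_eq_sum_range,
        show i + 1 - (i' + 1 + s) = N - s from by omega]
      have step : ∑ t ∈ Finset.range (N - s),
            ((((i' + 1 + s + t : ℕ) : ℚ)) + 1 - ((i' + 1 + s : ℕ) : ℚ))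
              * ((i : ℚ) + (p : ℚ) + 1 - ((i' + 1 + s + t : ℕ) : ℚ))
          = ∑ t ∈ Finset.range (N - s),
              ((t : ℚ) + 1) * (((N : ℚ) + (p : ℚ) - (s : ℚ)) - (t : ℚ)) := by
        refine Finset.sum_congr rfl fun t _ => ?_
        push_cast
        rw [hiq]
        ring
      rw [step, inner_tri, Nat.cast_sub hsN.le]
      ring
    · rw [sum_cubic, chooseFour N, chooseThree N]
      ring
  have B : (∑ a ∈ Finset.Icc (i' + 1) i, ∑ b ∈ Finset.Icc (i + 1) (i + p),
        (((i : ℚ) + (p : ℚ)) * ((i : ℚ) + 1 - (a : ℚ))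
          + (q : ℚ) * ((b : ℚ) - (i : ℚ))
          + ((b : ℚ) + 1 - (a : ℚ)) * (1 - (b : ℚ))))
      = ((p : ℚ) * ((p : ℚ) + 1) / 2) *
            (3 * ((N : ℚ) * ((N : ℚ) + 1) / 2)
              + (N : ℚ) * ((q : ℚ) + (i' : ℚ) - 2 * (i : ℚ)
                  - (2 * (p : ℚ) + 1) / 3)) := by
    rw [← Finset.Ico_add_one_right_eq_Icc, Finset.sum_Ico_eq_sum_range, houter]
    trans ∑ s ∈ Finset.range N,
        (((p:ℚ)*((p:ℚ)+1)/2 * ((i:ℚ)-(i':ℚ)) + (p:ℚ)*((p:ℚ)+1)/2 * ((q:ℚ)-(i:ℚ))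
            - ((p:ℚ)-1)*(p:ℚ)*((p:ℚ)+1)/3)
          + (-((p:ℚ)*((p:ℚ)+1)/2)) * (s : ℚ)
          + (0 : ℚ) * (s : ℚ) ^ 2 + (0 : ℚ) * (s : ℚ) ^ 3)
    · refine Finset.sum_congr rfl fun s hs => ?_
      rw [← Finset.Ico_add_one_right_eq_Icc, Finset.sum_Ico_eq_sum_range,
        show i + p + 1 - (i + 1) = p from by omega]
      trans ∑ t ∈ Finset.range p,
          ((((i:ℚ)+(p:ℚ))*((i:ℚ)-(i':ℚ)-(s:ℚ)) + (q:ℚ) - ((i:ℚ)+1-(i':ℚ)-(s:ℚ))*(i:ℚ))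
            + ((q:ℚ) - ((i:ℚ)+1-(i':ℚ)-(s:ℚ)) - (i:ℚ)) * (t : ℚ)
            + (-1 : ℚ) * (t : ℚ) ^ 2 + (0 : ℚ) * (t : ℚ) ^ 3)
      · refine Finset.sum_congr rfl fun t _ => ?_
        push_cast
        ring
      · rw [sum_cubic]
        ring
    · rw [sum_cubic, hiq]
      ring
  rw [A, B]
end
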